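/- If y : [0,∞) → [0,∞) satisfies y′(t) + c y(t) ≤ A (1+t)^{−5/2} (1 + δ M) for all t ≥ 0, where c, A, δ, M ≥ 0 are constants with c > 0, then y(t) ≤ y(0) e^{−ct} + C A (1+δM)(1+t)^{−5/2} for all t ≥ 0, for some constant C depending only on c. -/

import Mathlib

/-!
Comparison with a barrier instead of the Duhamel convolution integral. The integrating factor
`e^{ct}` makes `(y - w) e^{ct}` nonincreasing whenever `y' + c y ≤ w' + c w`, so `y ≤ w` once
`y 0 ≤ w 0`. For a forcing `B (1+t)^{-p}` the barrier `w t = y 0 e^{-ct} + B K (a + t)^{-p}`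
works with `a = max 1 (2p/c)` and `K = 2 a^p / c`: the shift `a` makes the loss `p/(a+t)` in the
derivative of `(a+t)^{-p}` at most `c/2`, and `(1+t)^{-p} ≤ a^p (a+t)^{-p}` because
`a + t ≤ a (1 + t)`.
-/

open Real Set

theorem le_mul_exp_neg_of_deriv_add_mul_nonpos {f f' : ℝ → ℝ} {c : ℝ}
    (hf : ∀ t, 0 ≤ t → HasDerivAt f (f' t) t) (hle : ∀ t, 0 ≤ t → f' t + c * f t ≤ 0)
    {t : ℝ} (ht : 0 ≤ t) : f t ≤ f 0 * exp (-c * t) := by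
  have hg : ∀ s, 0 ≤ s →
      HasDerivAt (fun s => f s * exp (c * s)) ((f' s + c * f s) * exp (c * s)) s := by
    intro s hs
    refine ((hf s hs).mul ((hasDerivAt_id s).const_mul c).exp).congr_deriv ?_
    simp only [id]
    ring
  have hanti : AntitoneOn (fun s => f s * exp (c * s)) (Ici 0) := by
    refine antitoneOn_of_hasDerivWithinAt_nonpos (f' := fun s => (f' s + c * f s) * exp (c * s))
      (convex_Ici 0)
      (fun s hs => (hg s hs).continuousAt.continuousWithinAt) (fun s hs => ?_) (fun s hs => ?_)
    · rw [interior_Ici] at hs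
      exact (hg s (le_of_lt hs)).hasDerivWithinAt
    · rw [interior_Ici] at hs
      exact mul_nonpos_of_nonpos_of_nonneg (hle s (le_of_lt hs)) (exp_pos _).le
  have hdecr : f t * exp (c * t) ≤ f 0 := by
    simpa using hanti self_mem_Ici ht ht
  calc f t = f t * exp (c * t) * exp (-c * t) := by
        rw [mul_assoc, ← exp_add, neg_mul, add_neg_cancel, exp_zero, mul_one]
    _ ≤ f 0 * exp (-c * t) := mul_le_mul_of_nonneg_right hdecr (exp_pos _).le

theorem le_of_deriv_add_mul_le_deriv_add_mul {y y' w w' : ℝ → ℝ} {c : ℝ}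
    (hy : ∀ t, 0 ≤ t → HasDerivAt y (y' t) t) (hw : ∀ t, 0 ≤ t → HasDerivAt w (w' t) t)
    (hle : ∀ t, 0 ≤ t → y' t + c * y t ≤ w' t + c * w t) (h0 : y 0 ≤ w 0)
    {t : ℝ} (ht : 0 ≤ t) : y t ≤ w t := by
  have hdiff := le_mul_exp_neg_of_deriv_add_mul_nonpos (f := y - w) (c := c)
    (fun s hs => (hy s hs).sub (hw s hs))
    (fun s hs => by simp only [Pi.sub_apply]; linarith [hle s hs]) ht
  simp only [Pi.sub_apply] at hdiff
  nlinarith [exp_pos (-c * t)]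

theorem rpow_neg_le_barrier {c p a t : ℝ} (hc : 0 < c) (hp : 0 ≤ p) (ha : 1 ≤ a)
    (hpa : 2 * p ≤ c * a) (ht : 0 ≤ t) :
    (1 + t) ^ (-p) ≤ 2 * a ^ p / c * (c * (a + t) ^ (-p) - p * (a + t) ^ (-p - 1)) := by
  have hat : 0 < a + t := by linarith
  have hφ : 0 ≤ (a + t) ^ (-p) := by positivity
  have hloss : p * (a + t) ^ (-p - 1) ≤ c / 2 * (a + t) ^ (-p) := by
    have hpc : p ≤ c / 2 * (a + t) := by nlinarith
    rw [rpow_sub_one hat.ne', mul_div_assoc', div_le_iff₀ hat]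
    nlinarith [mul_le_mul_of_nonneg_right hpc hφ]
  have hscale : (1 + t) ^ (-p) ≤ a ^ p * (a + t) ^ (-p) := by
    have hmul : (a * (1 + t)) ^ (-p) = (a ^ p)⁻¹ * (1 + t) ^ (-p) := by
      rw [mul_rpow (by linarith) (by linarith), rpow_neg (by linarith)]
    have hmono : (a * (1 + t)) ^ (-p) ≤ (a + t) ^ (-p) :=
      rpow_le_rpow_of_nonpos hat (by nlinarith) (neg_nonpos.2 hp)
    rw [hmul, inv_mul_le_iff₀ (by positivity)] at hmono
    exact hmono
  calc (1 + t) ^ (-p) ≤ a ^ p * (a + t) ^ (-p) := hscale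
    _ = 2 * a ^ p / c * (c * (a + t) ^ (-p) - c / 2 * (a + t) ^ (-p)) := by
        field_simp
        ring
    _ ≤ 2 * a ^ p / c * (c * (a + t) ^ (-p) - p * (a + t) ^ (-p - 1)) := by
        gcongr

theorem exists_decay_bound_of_deriv_add_mul_le_rpow {c p : ℝ} (hc : 0 < c) (hp : 0 ≤ p) :
    ∃ C, 0 < C ∧ ∀ (y y' : ℝ → ℝ) (B : ℝ), 0 ≤ B →
      (∀ t, 0 ≤ t → HasDerivAt y (y' t) t) →
      (∀ t, 0 ≤ t → y' t + c * y t ≤ B * (1 + t) ^ (-p)) →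
      ∀ t, 0 ≤ t → y t ≤ y 0 * exp (-c * t) + C * B * (1 + t) ^ (-p) := by
  set a := max 1 (2 * p / c)
  have ha : 1 ≤ a := le_max_left _ _
  have hpa : 2 * p ≤ c * a := by
    rw [← div_le_iff₀' hc]
    exact le_max_right _ _
  refine ⟨2 * a ^ p / c, by positivity, fun y y' B hB hy hforce t ht => ?_⟩
  set K := 2 * a ^ p / c
  have hw : ∀ s, 0 ≤ s → HasDerivAt (fun s => y 0 * exp (-c * s) + B * K * (a + s) ^ (-p))
      (-c * (y 0 * exp (-c * s)) + B * K * (-p * (a + s) ^ (-p - 1))) s := by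
    intro s hs
    have hpow := ((hasDerivAt_id s).const_add a).rpow_const (p := -p) (Or.inl (by simp; linarith))
    refine ((((hasDerivAt_id s).const_mul (-c)).exp.const_mul (y 0)).add
      (hpow.const_mul (B * K))).congr_deriv ?_
    simp only [id]
    ring
  have hsuper : ∀ s, 0 ≤ s → y' s + c * y s ≤
      -c * (y 0 * exp (-c * s)) + B * K * (-p * (a + s) ^ (-p - 1))
        + c * (y 0 * exp (-c * s) + B * K * (a + s) ^ (-p)) := fun s hs =>
    calc y' s + c * y s ≤ B * (1 + s) ^ (-p) := hforce s hs
      _ ≤ B * (K * (c * (a + s) ^ (-p) - p * (a + s) ^ (-p - 1))) :=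
        mul_le_mul_of_nonneg_left (rpow_neg_le_barrier hc hp ha hpa hs) hB
      _ = _ := by ring
  have hinit : y 0 ≤ y 0 * exp (-c * 0) + B * K * (a + 0) ^ (-p) := by
    simp only [mul_zero, exp_zero, mul_one, add_zero, le_add_iff_nonneg_right]
    positivity
  calc y t ≤ y 0 * exp (-c * t) + B * K * (a + t) ^ (-p) :=
        le_of_deriv_add_mul_le_deriv_add_mul hy hw hsuper hinit ht
    _ ≤ y 0 * exp (-c * t) + K * B * (1 + t) ^ (-p) := by
        have hshift : (a + t) ^ (-p) ≤ (1 + t) ^ (-p) :=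
          rpow_le_rpow_of_nonpos (by linarith) (by linarith) (neg_nonpos.2 hp)
        rw [mul_comm B K]
        gcongr

/-- Gronwall-type decay with forcing (1+t)^{-5/2}(1+δM): the constant C depends only on c. -/
theorem gronwall_decay_five_halves :
    ∀ c : ℝ, 0 < c → ∃ C : ℝ, 0 < C ∧
      ∀ (y y' : ℝ → ℝ) (A δ M : ℝ), 0 ≤ A → 0 ≤ δ → 0 ≤ M →
        (∀ t, 0 ≤ t → 0 ≤ y t) →
        (∀ t, 0 ≤ t → HasDerivAt y (y' t) t) →
        ContinuousOn y' (Set.Ici 0) →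
        (∀ t, 0 ≤ t → y' t + c * y t ≤ A * (1 + t) ^ (-(5:ℝ)/2) * (1 + δ * M)) →
        ∀ t, 0 ≤ t →
          y t ≤ y 0 * Real.exp (-c * t) + C * A * (1 + δ * M) * (1 + t) ^ (-(5:ℝ)/2) := by
  intro c hc
  obtain ⟨C, hC, hdecay⟩ := exists_decay_bound_of_deriv_add_mul_le_rpow (p := 5 / 2) hc (by norm_num)
  refine ⟨C, hC, fun y y' A δ M hA hδ hM _ hy _ hforce t ht => ?_⟩
  have hexp : -(5 : ℝ) / 2 = -(5 / 2) := by ring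
  have hB : 0 ≤ A * (1 + δ * M) := by positivity
  rw [hexp, mul_assoc C]
  exact hdecay y y' _ hB hy
    (fun s hs => by simpa only [hexp, mul_right_comm A] using hforce s hs) t ht
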